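/- For a graph G of order n, the corona product G ∘ K_1 (attaching one pendant vertex to each vertex of G) satisfies γ_{R2}(G ∘ K_1) = n + γ(G). -/

import Mathlib

open Finset Classical in
/-- The Roman `{2}`-domination number of a finite graph: the minimum weight of a
function `f : V → {0,1,2}` such that every vertex `v` with `f v = 0` satisfies
`∑_{u ∈ N(v)} f u ≥ 2`. -/
noncomputable def roman2 {V : Type*} [Fintype V] (G : SimpleGraph V) : ℕ :=
  sInf {w | ∃ f : V → ℕ, (∀ v, f v ≤ 2) ∧
    (∀ v, f v = 0 → 2 ≤ ∑ u ∈ Finset.univ.filter (fun u => G.Adj v u), f u) ∧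
    w = ∑ v, f v}

open Finset Classical in
/-- The domination number. -/
noncomputable def domNum {V : Type*} [Fintype V] (G : SimpleGraph V) : ℕ :=
  sInf {k | ∃ S : Finset V, S.card = k ∧ ∀ v, v ∉ S → ∃ u ∈ S, G.Adj u v}

open Finset Classical in
/-- The 2-domination number. -/
noncomputable def twoDomNum {V : Type*} [Fintype V] (G : SimpleGraph V) : ℕ :=
  sInf {k | ∃ S : Finset V, S.card = k ∧
    ∀ v, v ∉ S → 2 ≤ (S.filter (fun u => G.Adj u v)).card}


/-- The corona `G ∘ H`: one copy of `H` for each vertex of `G`, with vertex `a` of `G`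
joined to every vertex of its copy of `H`. -/
def corona {α β : Type*} (G : SimpleGraph α) (H : SimpleGraph β) :
    SimpleGraph (α ⊕ α × β) where
  Adj x y := match x, y with
    | Sum.inl a, Sum.inl b => G.Adj a b
    | Sum.inl a, Sum.inr (b, _) => a = b
    | Sum.inr (a, _), Sum.inl b => a = b
    | Sum.inr (a, w), Sum.inr (b, w') => a = b ∧ H.Adj w w'
  symm := by
    constructor
    rintro (a|⟨a,w⟩) (b|⟨b,w'⟩) h <;> simp_all [SimpleGraph.adj_comm, eq_comm]
  loopless := by
    constructor
    rintro (a|⟨a,w⟩) h <;> simp_all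

/-! In `G ∘ K₁` every vertex `v` of `G` forms a pair with its leaf `v'`. A Roman `{2}`-dominating
function gives each pair weight at least `1`, since if `f v' = 0` the only neighbour `v` of `v'`
carries `2`. The pairs of weight at least `2` dominate `G`: a pair of weight `1` has `f v = 0`, so
some `G`-neighbour `u` of `v` carries a positive weight, and then `u`'s pair is heavy or `u`'s leaf
is `0` and `f u = 2`. Hence the total weight is at least `n + γ(G)`. Conversely, weight `2` on a
minimum dominating set `S` and weight `1` on the leaves of the vertices outside `S` is Roman
`{2}`-dominating and has weight `n + |S|`. -/

open Finset SimpleGraph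

theorem sum_sum_prod_fin_one {α M : Type*} [Fintype α] [AddCommMonoid M] (f : α ⊕ α × Fin 1 → M) :
    ∑ x, f x = ∑ a, (f (Sum.inl a) + f (Sum.inr (a, 0))) := by
  simp [Fintype.sum_sum_type, Fintype.sum_prod_type, sum_add_distrib]

namespace SimpleGraph

variable {V : Type*} [Fintype V]

open Classical in
noncomputable def nbrWeight (G : SimpleGraph V) (f : V → ℕ) (v : V) : ℕ :=
  ∑ u ∈ univ.filter (fun u => G.Adj v u), f u

def IsRoman2Dom (G : SimpleGraph V) (f : V → ℕ) : Prop :=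
  (∀ v, f v ≤ 2) ∧ ∀ v, f v = 0 → 2 ≤ G.nbrWeight f v

def IsDominating (G : SimpleGraph V) (S : Finset V) : Prop :=
  ∀ v, v ∉ S → ∃ u ∈ S, G.Adj u v

variable {G : SimpleGraph V}

theorem exists_adj_ne_zero_of_nbrWeight_ne_zero {f : V → ℕ} {v : V} (h : G.nbrWeight f v ≠ 0) :
    ∃ u, G.Adj v u ∧ f u ≠ 0 := by
  classical
  obtain ⟨u, hu, hfu⟩ := exists_ne_zero_of_sum_ne_zero h
  exact ⟨u, (mem_filter.mp hu).2, hfu⟩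

variable (G) in
theorem roman2_eq_sInf :
    roman2 G = sInf {w | ∃ f, G.IsRoman2Dom f ∧ w = ∑ v, f v} := by
  simp only [roman2, IsRoman2Dom, nbrWeight, and_assoc]

theorem roman2_le_sum {f : V → ℕ} (hf : G.IsRoman2Dom f) : roman2 G ≤ ∑ v, f v :=
  roman2_eq_sInf G ▸ Nat.sInf_le ⟨f, hf, rfl⟩

theorem le_roman2 {k : ℕ} (h : ∀ f, G.IsRoman2Dom f → k ≤ ∑ v, f v) : k ≤ roman2 G := by
  have hconst : G.IsRoman2Dom fun _ => 2 := ⟨fun _ => le_rfl, fun _ h => absurd h two_ne_zero⟩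
  rw [roman2_eq_sInf]
  exact le_csInf ⟨_, _, hconst, rfl⟩ fun _ ⟨f, hf, hw⟩ => hw ▸ h f hf

theorem domNum_le_card {S : Finset V} (hS : G.IsDominating S) : domNum G ≤ S.card :=
  Nat.sInf_le ⟨S, rfl, hS⟩

variable (G) in
theorem exists_isDominating_card_eq_domNum : ∃ S, G.IsDominating S ∧ S.card = domNum G := by
  have hne : {k | ∃ S : Finset V, S.card = k ∧ G.IsDominating S}.Nonempty :=
    ⟨_, univ, rfl, fun v hv => absurd (mem_univ v) hv⟩
  obtain ⟨S, hcard, hS⟩ := Nat.sInf_mem hne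
  exact ⟨S, hS, hcard⟩

variable {β : Type*} [Fintype β]

theorem nbrWeight_corona_inl (H : SimpleGraph β) (f : V ⊕ V × β → ℕ) (v : V) :
    (corona G H).nbrWeight f (Sum.inl v) =
      G.nbrWeight (f ∘ Sum.inl) v + ∑ w, f (Sum.inr (v, w)) := by
  rw [nbrWeight, nbrWeight, sum_filter, sum_filter, Fintype.sum_sum_type, Fintype.sum_prod_type]
  congr 1
  rw [Fintype.sum_eq_single v fun x hx => by simp [corona, Ne.symm hx]]
  simp [corona]

theorem nbrWeight_corona_bot_inr (f : V ⊕ V × β → ℕ) (v : V) (w : β) :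
    (corona G (⊥ : SimpleGraph β)).nbrWeight f (Sum.inr (v, w)) = f (Sum.inl v) := by
  rw [nbrWeight, sum_filter, Fintype.sum_sum_type, Fintype.sum_eq_single v fun x hx => by
    simp [corona, Ne.symm hx]]
  simp [corona]

namespace IsRoman2Dom

theorem two_le_inl_of_inr_eq_zero {f : V ⊕ V × β → ℕ} (hf : (corona G ⊥).IsRoman2Dom f)
    {v : V} {w : β} (h : f (Sum.inr (v, w)) = 0) : 2 ≤ f (Sum.inl v) :=
  nbrWeight_corona_bot_inr (G := G) f v w ▸ hf.2 _ h

theorem one_le_inl_add_inr {f : V ⊕ V × β → ℕ} (hf : (corona G ⊥).IsRoman2Dom f)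
    (v : V) (w : β) : 1 ≤ f (Sum.inl v) + f (Sum.inr (v, w)) := by
  by_cases h : f (Sum.inr (v, w)) = 0
  · have := hf.two_le_inl_of_inr_eq_zero h
    omega
  · omega

variable {f : V ⊕ V × Fin 1 → ℕ} (hf : (corona G ⊥).IsRoman2Dom f)
include hf

theorem isDominating_heavy :
    G.IsDominating (univ.filter fun v => 2 ≤ f (Sum.inl v) + f (Sum.inr (v, 0))) := by
  intro v hv
  have hlight : f (Sum.inl v) + f (Sum.inr (v, 0)) < 2 := by simpa using hv
  have hleaf : f (Sum.inr (v, 0)) ≠ 0 := fun h => by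
    have := hf.two_le_inl_of_inr_eq_zero h
    omega
  have hv0 : f (Sum.inl v) = 0 := by omega
  have hnbr := hf.2 _ hv0
  rw [nbrWeight_corona_inl, Fin.sum_univ_one] at hnbr
  obtain ⟨u, hvu, hfu⟩ :=
    exists_adj_ne_zero_of_nbrWeight_ne_zero (G := G) (f := f ∘ Sum.inl) (v := v) (by omega)
  refine ⟨u, ?_, hvu.symm⟩
  simp only [mem_filter, mem_univ, true_and]
  by_cases hu0 : f (Sum.inr (u, 0)) = 0
  · have := hf.two_le_inl_of_inr_eq_zero hu0
    omega
  · simp only [Function.comp_apply] at hfu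
    omega

theorem card_add_domNum_le_sum : Fintype.card V + domNum G ≤ ∑ x, f x := by
  classical
  set T := univ.filter fun v => 2 ≤ f (Sum.inl v) + f (Sum.inr (v, 0))
  have hpair : ∀ v ∈ univ, 1 + (if v ∈ T then 1 else 0) ≤ f (Sum.inl v) + f (Sum.inr (v, 0)) := by
    intro v _
    split_ifs with hvT
    · exact (mem_filter.mp hvT).2
    · exact hf.one_le_inl_add_inr v 0
  calc Fintype.card V + domNum G
      ≤ Fintype.card V + T.card := Nat.add_le_add_left (domNum_le_card hf.isDominating_heavy) _
    _ = ∑ v, (1 + if v ∈ T then 1 else 0) := by simp [sum_add_distrib]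
    _ ≤ ∑ v, (f (Sum.inl v) + f (Sum.inr (v, 0))) := sum_le_sum hpair
    _ = ∑ x, f x := (sum_sum_prod_fin_one f).symm

end IsRoman2Dom

variable [DecidableEq V]

def coronaWeight (S : Finset V) : V ⊕ V × Fin 1 → ℕ :=
  Sum.elim (fun v => if v ∈ S then 2 else 0) (fun p => if p.1 ∈ S then 0 else 1)

theorem isRoman2Dom_coronaWeight {S : Finset V} (hS : G.IsDominating S) :
    (corona G ⊥).IsRoman2Dom (coronaWeight S) := by
  refine ⟨fun x => by cases x <;> simp only [coronaWeight, Sum.elim_inl, Sum.elim_inr] <;>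
    split_ifs <;> omega, ?_⟩
  rintro (v | ⟨v, w⟩) h0
  · have hvS : v ∉ S := by simpa [coronaWeight] using h0
    obtain ⟨u, huS, huv⟩ := hS v hvS
    have hu : 2 ≤ G.nbrWeight (coronaWeight S ∘ Sum.inl) v :=
      calc 2 = (coronaWeight S ∘ Sum.inl) u := by simp [coronaWeight, huS]
        _ ≤ _ := single_le_sum (fun _ _ => Nat.zero_le _) (by simpa using huv.symm)
    rw [nbrWeight_corona_inl]
    omega
  · have hvS : v ∈ S := by simpa [coronaWeight] using h0
    simp [nbrWeight_corona_bot_inr, coronaWeight, hvS]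

theorem sum_coronaWeight (S : Finset V) : ∑ x, coronaWeight S x = Fintype.card V + S.card := by
  have hpair : ∀ v, coronaWeight S (Sum.inl v) + coronaWeight S (Sum.inr (v, 0)) =
      1 + if v ∈ S then 1 else 0 := fun v => by
    simp only [coronaWeight, Sum.elim_inl, Sum.elim_inr]
    split_ifs <;> rfl
  rw [sum_sum_prod_fin_one]
  simp [hpair, sum_add_distrib]

end SimpleGraph

theorem roman2_corona_K1 {V : Type*} [Fintype V] (G : SimpleGraph V) :
    roman2 (corona G (⊥ : SimpleGraph (Fin 1))) = Fintype.card V + domNum G := by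
  classical
  obtain ⟨S, hS, hcard⟩ := G.exists_isDominating_card_eq_domNum
  refine le_antisymm ?_ (le_roman2 fun f hf => hf.card_add_domNum_le_sum)
  calc roman2 (corona G ⊥)
      ≤ ∑ x, coronaWeight S x := roman2_le_sum (isRoman2Dom_coronaWeight hS)
    _ = Fintype.card V + domNum G := by rw [sum_coronaWeight, hcard]
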